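/- For every x ∈ (−√8, √8), the principal value integral lim_{ε→0⁺} [ ∫_{−√8}^{x−ε} (8 − y²)^{3/2}/(24π·(x − y)) dy + ∫_{x+ε}^{√8} (8 − y²)^{3/2}/(24π·(x − y)) dy ] exists and equals x/2 − x³/24. -/

import Mathlib

/-!
Write `s = √(c - y²)` and `r = √(c - x²)`. Since `s² = r² + (x² - y²)`,
`s³ / (x - y) = r⁴ / ((x - y) s) + r² (x + y) / s + (x + y) s`, and every term has an elementary
antiderivative. The only singular one is `r³ (log (c - x y + r s) - log (x - y))`; its logarithmic
singularity is even in `y - x`, so it cancels between the two sides of the principal value, which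
is therefore the difference of the antiderivative at `±√c`, namely `π x (3c/2 - x²)`.
-/

open MeasureTheory Filter Set Real Topology

section PrincipalValue

variable {f F : ℝ → ℝ} {a b x : ℝ}

theorem tendsto_integral_add_integral_of_hasDerivAt (hax : a < x) (hxb : x < b)
    (hFc : ContinuousOn F (Icc a b \ {x})) (hF : ∀ y ∈ Ioo a b, y ≠ x → HasDerivAt F (f y) y)
    (hf : ContinuousOn f (Icc a b \ {x}))
    (hsym : Tendsto (fun ε => F (x + ε) - F (x - ε)) (𝓝[>] 0) (𝓝 0)) :
    Tendsto (fun ε => (∫ y in a..x - ε, f y) + ∫ y in x + ε..b, f y) (𝓝[>] 0)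
      (𝓝 (F b - F a)) := by
  have hFTC : ∀ u v, a ≤ u → u ≤ v → v ≤ b → x ∉ Icc u v → ∫ y in u..v, f y = F v - F u := by
    intro u v hau huv hvb hx
    have hsub : Icc u v ⊆ Icc a b \ {x} := fun y hy =>
      ⟨⟨hau.trans hy.1, hy.2.trans hvb⟩, fun h => hx (h ▸ hy)⟩
    refine intervalIntegral.integral_eq_sub_of_hasDerivAt_of_le huv (hFc.mono hsub)
      (fun y hy => hF y ⟨hau.trans_lt hy.1, hy.2.trans_le hvb⟩ fun h => hx (h ▸ Ioo_subset_Icc_self hy))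
      (hf.mono (by rwa [uIcc_of_le huv])).intervalIntegrable
  have hsmall : Ioo 0 (min (x - a) (b - x)) ∈ 𝓝[>] (0 : ℝ) :=
    Ioo_mem_nhdsGT (lt_min (sub_pos.2 hax) (sub_pos.2 hxb))
  have hsplit : ∀ ε ∈ Ioo 0 (min (x - a) (b - x)),
      F b - F a - (F (x + ε) - F (x - ε)) = (∫ y in a..x - ε, f y) + ∫ y in x + ε..b, f y := by
    rintro ε ⟨hε, hεx⟩
    have := lt_min_iff.1 hεx
    rw [hFTC a (x - ε) le_rfl (by linarith) (by linarith) fun h => by linarith [h.2],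
      hFTC (x + ε) b (by linarith) (by linarith) le_rfl fun h => by linarith [h.1]]
    ring
  simpa using (tendsto_const_nhds.sub hsym).congr' (eventuallyEq_of_mem hsmall hsplit)

theorem tendsto_sub_of_eq_add_mul_log {P : ℝ → ℝ} {k : ℝ} (hP : ContinuousAt P x)
    (hF : ∀ y, F y = P y + k * log (x - y)) :
    Tendsto (fun ε => F (x + ε) - F (x - ε)) (𝓝 0) (𝓝 0) := by
  have hcancel : ∀ ε, F (x + ε) - F (x - ε) = P (x + ε) - P (x - ε) := fun ε => by
    rw [hF, hF, show x - (x + ε) = -ε by ring, sub_sub_cancel, log_neg_eq_log]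
    ring
  have hplus : Tendsto (fun ε => x + ε) (𝓝 0) (𝓝 x) := by
    simpa using (continuous_const_add x).tendsto 0
  have hminus : Tendsto (fun ε => x - ε) (𝓝 0) (𝓝 x) := by
    simpa using (continuous_sub_left x).tendsto 0
  simpa [hcancel] using (hP.tendsto.comp hplus).sub (hP.tendsto.comp hminus)

end PrincipalValue

section Semicircle

variable {c x y : ℝ}

theorem hasDerivAt_sqrt_sub_sq (hy : y ^ 2 < c) :
    HasDerivAt (fun y => √(c - y ^ 2)) (-y / √(c - y ^ 2)) y := by
  have hs : √(c - y ^ 2) ≠ 0 := (sqrt_pos.2 (sub_pos.2 hy)).ne'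
  refine (((hasDerivAt_pow 2 y).const_sub c).sqrt (sub_pos.2 hy).ne').congr_deriv ?_
  field_simp
  ring

theorem hasDerivAt_arcsin_div_sqrt (hy : y ^ 2 < c) :
    HasDerivAt (fun y => arcsin (y / √c)) (1 / √(c - y ^ 2)) y := by
  have hc : 0 < c := (sq_nonneg y).trans_lt hy
  have hq : 0 < √c := sqrt_pos.2 hc
  have habs : |y / √c| < 1 := by
    rw [abs_div, abs_of_pos hq, div_lt_one hq, ← sqrt_sq_eq_abs]
    exact sqrt_lt_sqrt (sq_nonneg y) hy
  have h := (hasDerivAt_arcsin (abs_lt.1 habs).1.ne' (abs_lt.1 habs).2.ne).comp y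
    ((hasDerivAt_id y).div_const √c)
  refine h.congr_deriv ?_
  have hsq : 1 - (y / √c) ^ 2 = (c - y ^ 2) / c := by
    rw [div_pow, sq_sqrt hc.le]; field_simp
  rw [hsq, sqrt_div' _ hc.le]
  field_simp

theorem hasDerivAt_semicircle_area (hy : y ^ 2 < c) :
    HasDerivAt (fun y => (y * √(c - y ^ 2) + c * arcsin (y / √c)) / 2) (√(c - y ^ 2)) y := by
  have hs2 : √(c - y ^ 2) ^ 2 = c - y ^ 2 := sq_sqrt (sub_pos.2 hy).le
  have hs : √(c - y ^ 2) ≠ 0 := (sqrt_pos.2 (sub_pos.2 hy)).ne'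
  refine ((((hasDerivAt_id y).mul (hasDerivAt_sqrt_sub_sq hy)).add
    ((hasDerivAt_arcsin_div_sqrt hy).const_mul c)).div_const 2).congr_deriv ?_
  field_simp
  simp only [id]
  linear_combination (-1) * hs2

theorem hasDerivAt_neg_sqrt_sub_sq_pow_three (hy : y ^ 2 < c) :
    HasDerivAt (fun y => -√(c - y ^ 2) ^ 3 / 3) (y * √(c - y ^ 2)) y := by
  have hs : √(c - y ^ 2) ≠ 0 := (sqrt_pos.2 (sub_pos.2 hy)).ne'
  refine (((hasDerivAt_sqrt_sub_sq hy).pow 3).neg.div_const 3).congr_deriv ?_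
  field_simp
  ring

theorem sub_mul_add_sqrt_mul_sqrt_pos (hx : x ^ 2 < c) (hy : y ^ 2 ≤ c) :
    0 < c - x * y + √(c - x ^ 2) * √(c - y ^ 2) := by
  have : 0 ≤ √(c - x ^ 2) * √(c - y ^ 2) := by positivity
  nlinarith [sq_nonneg (x - y), sq_nonneg (x + y)]

theorem hasDerivAt_log_sub_log (hx : x ^ 2 < c) (hy : y ^ 2 < c) (hxy : x ≠ y) :
    HasDerivAt (fun y => log (c - x * y + √(c - x ^ 2) * √(c - y ^ 2)) - log (x - y))
      (√(c - x ^ 2) / ((x - y) * √(c - y ^ 2))) y := by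
  set r := √(c - x ^ 2)
  set s := √(c - y ^ 2)
  have hs2 : s ^ 2 = c - y ^ 2 := sq_sqrt (sub_pos.2 hy).le
  have hr2 : r ^ 2 = c - x ^ 2 := sq_sqrt (sub_pos.2 hx).le
  have hs : s ≠ 0 := (sqrt_pos.2 (sub_pos.2 hy)).ne'
  have hxy' : x - y ≠ 0 := sub_ne_zero.2 hxy
  have hA : c - x * y + r * s ≠ 0 := (sub_mul_add_sqrt_mul_sqrt_pos hx hy.le).ne'
  have hA' : HasDerivAt (fun y => c - x * y + r * √(c - y ^ 2)) (-x + r * (-y / s)) y := by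
    have hlin : HasDerivAt (fun y => c - x * y) (-x) y := by
      simpa using ((hasDerivAt_id y).const_mul x).const_sub c
    exact hlin.add ((hasDerivAt_sqrt_sub_sq hy).const_mul r)
  have hsub : HasDerivAt (fun y => x - y) (-1) y := by
    simpa using (hasDerivAt_id y).const_sub x
  refine ((hA'.log hA).sub (hsub.log hxy')).congr_deriv ?_
  change (-x + r * (-y / s)) / (c - x * y + r * s) - -1 / (x - y) = r / ((x - y) * s)
  field_simp
  linear_combination r * hs2 - s * hr2

noncomputable def pvPrimitiveRegular (c x y : ℝ) : ℝ :=
  √(c - x ^ 2) ^ 3 * log (c - x * y + √(c - x ^ 2) * √(c - y ^ 2))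
    + (c - x ^ 2) * (x * arcsin (y / √c) - √(c - y ^ 2))
    + x * ((y * √(c - y ^ 2) + c * arcsin (y / √c)) / 2)
    + -√(c - y ^ 2) ^ 3 / 3

/-- `Real.log` is even, so `log (x - y)` is `log |x - y|` on both sides of `x`. -/
noncomputable def pvPrimitive (c x y : ℝ) : ℝ :=
  pvPrimitiveRegular c x y - √(c - x ^ 2) ^ 3 * log (x - y)

theorem hasDerivAt_pvPrimitive (hx : x ^ 2 < c) (hy : y ^ 2 < c) (hxy : x ≠ y) :
    HasDerivAt (pvPrimitive c x) (√(c - y ^ 2) ^ 3 / (x - y)) y := by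
  have h := (((hasDerivAt_log_sub_log hx hy hxy).const_mul (√(c - x ^ 2) ^ 3)).add
    ((((hasDerivAt_arcsin_div_sqrt hy).const_mul x).sub
      (hasDerivAt_sqrt_sub_sq hy)).const_mul (c - x ^ 2))).add
    ((hasDerivAt_semicircle_area hy).const_mul x) |>.add
    (hasDerivAt_neg_sqrt_sub_sq_pow_three hy)
  refine (h.congr_of_eventuallyEq (Eventually.of_forall fun y => ?_)).congr_deriv ?_
  · simp only [pvPrimitive, pvPrimitiveRegular, Pi.add_apply, Pi.sub_apply]
    ring
  set r := √(c - x ^ 2)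
  set s := √(c - y ^ 2)
  have hs2 : s ^ 2 = c - y ^ 2 := sq_sqrt (sub_pos.2 hy).le
  have hr2 : r ^ 2 = c - x ^ 2 := sq_sqrt (sub_pos.2 hx).le
  have hs : s ≠ 0 := (sqrt_pos.2 (sub_pos.2 hy)).ne'
  have hxy' : x - y ≠ 0 := sub_ne_zero.2 hxy
  field_simp
  linear_combination (r ^ 2 + c - x ^ 2) * hr2 - (s ^ 2 + c - x ^ 2) * hs2

theorem continuousAt_pvPrimitiveRegular (hx : x ^ 2 < c) (hy : y ^ 2 ≤ c) :
    ContinuousAt (pvPrimitiveRegular c x) y := by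
  have hlog : ContinuousAt (fun y => log (c - x * y + √(c - x ^ 2) * √(c - y ^ 2))) y :=
    ContinuousAt.log (by fun_prop) (sub_mul_add_sqrt_mul_sqrt_pos hx hy).ne'
  unfold pvPrimitiveRegular
  fun_prop

theorem pvPrimitive_sqrt_sub_pvPrimitive_neg_sqrt (hx : x ^ 2 < c) :
    pvPrimitive c x √c - pvPrimitive c x (-√c) = π * x * (3 * c / 2 - x ^ 2) := by
  have hc : 0 < c := (sq_nonneg x).trans_lt hx
  set q := √c with hq
  have hq2 : q ^ 2 = c := sq_sqrt hc.le
  have hq0 : 0 < q := sqrt_pos.2 hc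
  have hxq : |x| < q := by rw [← sqrt_sq_eq_abs, hq]; exact sqrt_lt_sqrt (sq_nonneg x) hx
  have hs : √(c - q ^ 2) = 0 := by rw [hq2, sub_self, sqrt_zero]
  have hs' : √(c - (-q) ^ 2) = 0 := by rw [neg_sq, hs]
  have hlog : log (c - x * q) - log (x - q) = log q := by
    rw [show c - x * q = q * (q - x) by linear_combination -hq2, show x - q = -(q - x) by ring,
      log_neg_eq_log, log_mul hq0.ne' (by linarith [le_abs_self x])]
    ring
  have hlog' : log (c - x * -q) - log (x - -q) = log q := by
    rw [show c - x * -q = q * (x - -q) by linear_combination -hq2,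
      log_mul hq0.ne' (by linarith [neg_abs_le x])]
    ring
  have harcsin : arcsin (q / q) = π / 2 := by rw [div_self hq0.ne', arcsin_one]
  have harcsin' : arcsin (-q / q) = -(π / 2) := by
    rw [neg_div, arcsin_neg, harcsin]
  simp only [pvPrimitive, pvPrimitiveRegular, ← hq, hs, hs', harcsin, harcsin', mul_zero, add_zero]
  linear_combination √(c - x ^ 2) ^ 3 * (hlog - hlog')

end Semicircle

theorem tendsto_pv_integral_rpow_three_halves_div {c x : ℝ} (hx : x ∈ Ioo (-√c) √c) :
    Tendsto (fun ε => (∫ y in -√c..x - ε, (c - y ^ 2) ^ ((3 : ℝ) / 2) / (x - y))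
        + ∫ y in x + ε..√c, (c - y ^ 2) ^ ((3 : ℝ) / 2) / (x - y))
      (𝓝[>] 0) (𝓝 (π * x * (3 * c / 2 - x ^ 2))) := by
  have hc : 0 ≤ c := (sqrt_pos.1 (by linarith [hx.1, hx.2])).le
  have hx2 : x ^ 2 < c := sq_sqrt hc ▸ sq_lt_sq' hx.1 hx.2
  have hIcc : ∀ y ∈ Icc (-√c) √c, y ^ 2 ≤ c := fun y hy => sq_sqrt hc ▸ sq_le_sq' hy.1 hy.2
  have hIoo : ∀ y ∈ Ioo (-√c) √c, y ^ 2 < c := fun y hy => sq_sqrt hc ▸ sq_lt_sq' hy.1 hy.2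
  rw [← pvPrimitive_sqrt_sub_pvPrimitive_neg_sqrt hx2]
  refine tendsto_integral_add_integral_of_hasDerivAt hx.1 hx.2 ?_ ?_ ?_ ?_
  · rintro y ⟨hy, hyx⟩
    exact ((continuousAt_pvPrimitiveRegular hx2 (hIcc y hy)).sub (continuousAt_const.mul
      ((continuousAt_const.sub continuousAt_id).log (sub_ne_zero.2 (Ne.symm hyx))))).continuousWithinAt
  · intro y hy hyx
    rw [rpow_div_two_eq_sqrt 3 (sub_pos.2 (hIoo y hy)).le, rpow_ofNat]
    exact hasDerivAt_pvPrimitive hx2 (hIoo y hy) (Ne.symm hyx)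
  · refine ((continuous_const.sub (continuous_pow 2)).rpow_const fun _ => Or.inr (by norm_num))
      |>.continuousOn.div (continuousOn_const.sub continuousOn_id) fun y hy => ?_
    exact sub_ne_zero.2 (Ne.symm hy.2)
  · refine (tendsto_sub_of_eq_add_mul_log (k := -√(c - x ^ 2) ^ 3)
      (continuousAt_pvPrimitiveRegular hx2 hx2.le) fun y => ?_).mono_left nhdsWithin_le_nhds
    rw [pvPrimitive, neg_mul, sub_eq_add_neg]

/-- For `x ∈ (−√8, √8)`, the principal value of
`∫ (8 − y²)^{3/2}/(24π(x − y)) dy` over `(−√8, √8)` exists and equals `x/2 − x³/24`. -/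
theorem stmt10 (x : ℝ) (hx : x ∈ Set.Ioo (-Real.sqrt 8) (Real.sqrt 8)) :
    Tendsto (fun ε : ℝ =>
        (∫ y in (-Real.sqrt 8)..(x - ε),
          (8 - y ^ 2) ^ ((3 : ℝ) / 2) / (24 * Real.pi * (x - y)))
        + ∫ y in (x + ε)..(Real.sqrt 8),
          (8 - y ^ 2) ^ ((3 : ℝ) / 2) / (24 * Real.pi * (x - y)))
      (nhdsWithin 0 (Set.Ioi 0)) (nhds (x / 2 - x ^ 3 / 24)) := by
  have h := (tendsto_pv_integral_rpow_three_halves_div hx).const_mul (24 * π)⁻¹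
  rw [show (24 * π)⁻¹ * (π * x * (3 * 8 / 2 - x ^ 2)) = x / 2 - x ^ 3 / 24 by
    field_simp; ring] at h
  refine h.congr fun ε => ?_
  simp only [mul_add, ← intervalIntegral.integral_const_mul]
  congr 1 <;> congr 1 <;> funext y <;> rw [inv_mul_eq_div, div_div, mul_comm (x - y)]
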